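/- arXiv:2405.15120 — 2 statements merged into one kernel-verified Lean document; each statement's English description precedes it below -/
import Mathlib

section
/- With the notation of the greedy column assignment on the transportation polytope, a feasible completion always exists: for any probability vectors a, b and any column c, there exists θ ∈ F whose column c equals the greedy vector θ*(·,c) defined by θ*(n,c) = min(a_n, b_c) and θ*(i,c) = min(a_i, b_c - Σ_{k>i} θ*(k,c)). -/
open Finset

/-- Membership in the transportation polytope with row marginals `a` and column
marginals `b`. -/
def MemTransportation {n : ℕ} (a b : Fin n → ℝ) (θ : Fin n → Fin n → ℝ) : Prop :=
  (∀ i j, 0 ≤ θ i j) ∧ (∀ i, ∑ j, θ i j = a i) ∧ (∀ j, ∑ i, θ i j = b j)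

private lemma greedy_min_aux (x Y B : ℝ) (hx : 0 ≤ x) (_hY : 0 ≤ Y) :
    min x (B - min Y B) + min Y B = min (x + Y) B := by
  rcases le_total Y B with h | h
  · rw [min_eq_left h]
    rcases le_total x (B - Y) with h2 | h2
    · rw [min_eq_left h2, min_eq_left (by linarith)]
    · rw [min_eq_right h2, min_eq_right (by linarith)]; ring
  · rw [min_eq_right h, sub_self, min_eq_right hx, min_eq_right (by linarith)]; ring

/-- a feasible completion of the greedy column always exists: for any
probability vectors `a, b` and any column `c`, there exists `θ` in the transportation
polytope whose column `c` equals the greedy vector `θ*` defined by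
`θ*(n,c) = min (a n) (b c)` and `θ*(i,c) = min (a i) (b c - Σ_{k>i} θ*(k,c))`. -/
theorem greedy_column_feasible_completion_exists {n : ℕ}
    (a b : Fin n → ℝ)
    (ha0 : ∀ i, 0 ≤ a i) (hb0 : ∀ j, 0 ≤ b j)
    (ha1 : ∑ i, a i = 1) (hb1 : ∑ j, b j = 1)
    (c : Fin n)
    (θstar : Fin n → ℝ)
    (hgreedy : ∀ i : Fin n,
      θstar i = min (a i) (b c - ∑ k ∈ univ.filter (fun k => i < k), θstar k)) :
    ∃ θ : Fin n → Fin n → ℝ, MemTransportation a b θ ∧ ∀ i, θ i c = θstar i := by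
  classical
  have hbc0 : 0 ≤ b c := hb0 c
  have hbc1 : b c ≤ 1 := by
    have := Finset.single_le_sum (fun j _ => hb0 j) (mem_univ c)
    linarith [hb1 ▸ this]
  have key : ∀ d m, m + d = n →
      (∑ k ∈ univ.filter (fun k : Fin n => m ≤ k.val), θstar k) =
        min (∑ k ∈ univ.filter (fun k : Fin n => m ≤ k.val), a k) (b c) := by
    intro d
    induction d with
    | zero =>
      intro m hm
      have hempty : univ.filter (fun k : Fin n => m ≤ k.val) = ∅ := by
        refine Finset.filter_eq_empty_iff.mpr ?_
        intro k _
        have := k.isLt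
        omega
      simp [hempty, min_eq_left hbc0]
    | succ d ih =>
      intro m hm
      have hmn : m < n := by omega
      set i : Fin n := ⟨m, hmn⟩ with hi
      have hsplit : univ.filter (fun k : Fin n => m ≤ k.val) =
          insert i (univ.filter (fun k : Fin n => m + 1 ≤ k.val)) := by
        ext k
        simp only [mem_filter, mem_univ, true_and, mem_insert, Fin.ext_iff, hi]
        omega
      have hnotmem : i ∉ univ.filter (fun k : Fin n => m + 1 ≤ k.val) := by
        simp [hi]
      have hfc : univ.filter (fun k : Fin n => i < k) =
          univ.filter (fun k : Fin n => m + 1 ≤ k.val) := by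
        ext k
        simp only [mem_filter, mem_univ, true_and, Fin.lt_def, hi]
        omega
      have hih := ih (m + 1) (by omega)
      rw [hsplit, Finset.sum_insert hnotmem, Finset.sum_insert hnotmem]
      have hg := hgreedy i
      rw [hfc, hih] at hg
      rw [hg, hih]
      exact greedy_min_aux (a i) _ (b c) (ha0 i) (Finset.sum_nonneg fun k _ => ha0 k)
  have htail : ∀ i : Fin n, (∑ k ∈ univ.filter (fun k : Fin n => i < k), θstar k) =
      min (∑ k ∈ univ.filter (fun k : Fin n => i.val + 1 ≤ k.val), a k) (b c) := by
    intro i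
    have hfc : univ.filter (fun k : Fin n => i < k) =
        univ.filter (fun k : Fin n => i.val + 1 ≤ k.val) := by
      ext k
      simp only [mem_filter, mem_univ, true_and, Fin.lt_def]
      omega
    rw [hfc]
    exact key (n - (i.val + 1)) (i.val + 1) (by have := i.isLt; omega)
  have hθ0 : ∀ i, 0 ≤ θstar i := by
    intro i
    rw [hgreedy i, htail i]
    refine le_min (ha0 i) ?_
    have := min_le_right (∑ k ∈ univ.filter (fun k : Fin n => i.val + 1 ≤ k.val), a k) (b c)
    linarith
  have hθa : ∀ i, θstar i ≤ a i := fun i => by rw [hgreedy i]; exact min_le_left _ _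
  have htot : ∑ i, θstar i = b c := by
    have h0 : univ.filter (fun k : Fin n => 0 ≤ k.val) = univ := by simp
    have hk := key n 0 (by omega)
    rw [h0] at hk
    rw [hk, ha1, min_eq_right hbc1]
  refine ⟨fun i j => if j = c then θstar i else (a i - θstar i) * b j / (1 - b c), ⟨?_, ?_, ?_⟩, ?_⟩
  · intro i j
    by_cases hj : j = c
    · simp [hj, hθ0 i]
    · simp only [hj, if_false]
      rcases lt_or_eq_of_le hbc1 with hs | hs
      · exact div_nonneg (mul_nonneg (by linarith [hθa i]) (hb0 j)) (by linarith)
      · rw [← hs, sub_self, div_zero]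
  · intro i
    have hstep : (∑ j, if j = c then θstar i else (a i - θstar i) * b j / (1 - b c)) =
        θstar i + ∑ j ∈ univ.erase c, (a i - θstar i) * b j / (1 - b c) := by
      rw [← Finset.add_sum_erase _ _ (mem_univ c), if_pos rfl]
      congr 1
      exact Finset.sum_congr rfl fun j hj => if_neg (Finset.mem_erase.mp hj).1
    rw [hstep, ← Finset.sum_div, ← Finset.mul_sum, Finset.sum_erase_eq_sub (mem_univ c), hb1]
    rcases lt_or_eq_of_le hbc1 with hs | hs
    · have hne : (1 : ℝ) - b c ≠ 0 := by linarith
      rw [mul_div_assoc, div_self hne, mul_one]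
      ring
    · have hzero : ∀ k ∈ (univ : Finset (Fin n)), 0 ≤ a k - θstar k :=
        fun k _ => by linarith [hθa k]
      have hsum : ∑ k, (a k - θstar k) = 0 := by
        rw [Finset.sum_sub_distrib, ha1, htot, ← hs, sub_self]
      have hri : a i - θstar i = 0 :=
        (Finset.sum_eq_zero_iff_of_nonneg hzero).mp hsum i (mem_univ i)
      rw [hri, zero_mul, zero_div, add_zero]
      linarith
  · intro j
    by_cases hj : j = c
    · subst hj
      simp [htot]
    · have hstep : (∑ i, if j = c then θstar i else (a i - θstar i) * b j / (1 - b c)) =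
          ∑ i, (a i - θstar i) * b j / (1 - b c) := by
        exact Finset.sum_congr rfl fun i _ => if_neg hj
      rw [hstep, ← Finset.sum_div, ← Finset.sum_mul, Finset.sum_sub_distrib, ha1, htot]
      rcases lt_or_eq_of_le hbc1 with hs | hs
      · have hne : (1 : ℝ) - b c ≠ 0 := by linarith
        rw [mul_comm, mul_div_assoc, div_self hne, mul_one]
      · have hbj : b j = 0 := by
          have hzero : ∀ k ∈ univ.erase c, 0 ≤ b k := fun k _ => hb0 k
          have hsum : ∑ k ∈ univ.erase c, b k = 0 := by
            rw [Finset.sum_erase_eq_sub (mem_univ c), hb1, ← hs, sub_self]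
          exact (Finset.sum_eq_zero_iff_of_nonneg hzero).mp hsum j
            (Finset.mem_erase.mpr ⟨hj, mem_univ j⟩)
        rw [hbj, mul_zero, zero_div]
  · intro i
    simp
end

section
/- Under the comonotonic coupling of (O_f, O_b) with marginal CDFs F₁(i) = Σ_{k≤i} e_f(k) and F₂(j) = Σ_{k≤j} e_b(k), if e_f(i) = 1/n for all i and e_b is increasing in its index, then the comonotonic joint PMF θ^P satisfies the pathwise-monotonicity property θ^P(i,j) = 0 for all j < i (i.e., P(O_f > O_b) = 0). -/
open Finset

/-- under the comonotonic coupling with marginal CDFs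
`F₁(i) = Σ_{k ≤ i} e_f(k)` and `F₂(j) = Σ_{k ≤ j} e_b(k)`, if `e_f` is uniform on
`{1,…,n}` and `e_b` is increasing in its index, then the comonotonic joint PMF
`θ^P(i,j) = Σ_{ℓ,ℓ'∈{0,1}} (-1)^{ℓ+ℓ'} min (F₁ (i-ℓ)) (F₂ (j-ℓ'))` satisfies the
pathwise-monotonicity property `θ^P(i,j) = 0` for all `j < i`. -/
theorem comonotonic_pmf_pathwise_monotone (n : ℕ) (hn : 0 < n)
    (ef eb : ℕ → ℝ)
    (hef : ∀ k ∈ Finset.Icc 1 n, ef k = 1 / n)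
    (heb0 : ∀ k ∈ Finset.Icc 1 n, 0 ≤ eb k)
    (heb1 : ∑ k ∈ Finset.Icc 1 n, eb k = 1)
    (hebmono : ∀ k ∈ Finset.Icc 1 n, ∀ k' ∈ Finset.Icc 1 n, k ≤ k' → eb k ≤ eb k')
    (F₁ F₂ : ℕ → ℝ)
    (hF₁ : ∀ i, F₁ i = ∑ k ∈ Finset.Icc 1 i, ef k)
    (hF₂ : ∀ j, F₂ j = ∑ k ∈ Finset.Icc 1 j, eb k)
    (θP : ℕ → ℕ → ℝ)
    (hθP : ∀ i j, θP i j = ∑ l ∈ Finset.range 2, ∑ l' ∈ Finset.range 2,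
        (-1 : ℝ) ^ (l + l') * min (F₁ (i - l)) (F₂ (j - l'))) :
    ∀ i j, 1 ≤ j → j < i → i ≤ n → θP i j = 0 := by
  have hnR : (0:ℝ) < n := by exact_mod_cast hn
  have hF1 : ∀ m, m ≤ n → F₁ m = m / n := by
    intro m hm
    rw [hF₁]
    rw [Finset.sum_congr rfl (fun k hk => hef k (Finset.Icc_subset_Icc_right hm hk))]
    simp [Nat.card_Icc]
    ring
  have hF2mono : ∀ a b : ℕ, a ≤ b → b ≤ n → F₂ a ≤ F₂ b := by
    intro a b hab hbn
    rw [hF₂, hF₂]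
    apply Finset.sum_le_sum_of_subset_of_nonneg (Finset.Icc_subset_Icc_right hab)
    intro k hk _
    exact heb0 k (Finset.Icc_subset_Icc_right hbn hk)
  have key : ∀ m, 1 ≤ m → m ≤ n → F₂ m ≤ m / n := by
    intro m hm hmn
    rw [hF₂]
    set A := ∑ k ∈ Finset.Icc 1 m, eb k with hA
    set B := ∑ k ∈ Finset.Icc (m+1) n, eb k with hB
    have hsplit : A + B = 1 := by
      rw [hA, hB, ← heb1, ← Finset.sum_union]
      · congr 1
        ext x
        simp
        omega
      · apply Finset.disjoint_left.mpr
        intro x hx hx'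
        simp at hx hx'
        omega
    have hAle : A ≤ m * eb m := by
      calc A ≤ (Finset.Icc 1 m).card • eb m := by
              apply Finset.sum_le_card_nsmul
              intro k hk
              simp at hk
              exact hebmono k (by simp; omega) m (by simp; omega) hk.2
        _ = m * eb m := by simp [Nat.card_Icc]
    have hBge : ((n:ℝ) - m) * eb m ≤ B := by
      have h : (Finset.Icc (m+1) n).card • eb m ≤ B := by
        apply Finset.card_nsmul_le_sum
        intro k hk
        simp at hk
        exact hebmono m (by simp; omega) k (by simp; omega) (by omega)
      calc ((n:ℝ) - m) * eb m = (Finset.Icc (m+1) n).card • eb m := by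
            simp [Nat.card_Icc, Nat.cast_sub hmn]
        _ ≤ B := h
    rw [le_div_iff₀ hnR]
    have hmr : (0:ℝ) ≤ (m:ℝ) := by positivity
    have hnm : (0:ℝ) ≤ (n:ℝ) - m := by
      have : (m:ℝ) ≤ n := by exact_mod_cast hmn
      linarith
    nlinarith [mul_le_mul_of_nonneg_left hAle hnm, mul_le_mul_of_nonneg_left hBge hmr]
  intro i j hj hji hin
  have hi1 : i - 1 ≤ n := by omega
  have h1 : F₂ j ≤ F₁ (i-1) := by
    rw [hF1 _ hi1]
    calc F₂ j ≤ j / n := key j hj (by omega)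
      _ ≤ ((i-1 : ℕ):ℝ) / n := by
          gcongr
          exact_mod_cast (by omega : j ≤ i - 1)
  have hF1le : F₁ (i-1) ≤ F₁ i := by
    rw [hF1 _ hi1, hF1 _ hin]
    gcongr
    exact_mod_cast Nat.sub_le i 1
  have h2 : F₂ j ≤ F₁ i := h1.trans hF1le
  have h3 : F₂ (j-1) ≤ F₁ (i-1) := (hF2mono (j-1) j (Nat.sub_le j 1) (by omega)).trans h1
  have h4 : F₂ (j-1) ≤ F₁ i := h3.trans hF1le
  rw [hθP]
  simp only [Finset.sum_range_succ, Finset.sum_range_zero, Nat.sub_zero, pow_zero, pow_one,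
    pow_succ, pow_add]
  rw [min_eq_right h2, min_eq_right h4, min_eq_right h1, min_eq_right h3]
  ring
end
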